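/- If a bipartite m-edge-coloured graph G is Γ-switch equivalent to a monochromatic graph (Γ transitive on [m]), then there is a switching sequence Σ transforming G to a monochromatic graph with |Σ| ≤ |V(G)| − 1 + c_Γ·|V(G)|·(|E(G)| − |V(G)| + 1), where c_Γ is a constant depending only on Γ and m (namely the maximum diameter of a component of the reconfiguration graph of edge-colourings of the labelled 4-cycle under single switches). -/

import Mathlib

open Equiv

/-- An `m`-edge-coloured graph on vertex set `V`: `G u v = some i` means there is an
edge `uv` of colour `i` (stored symmetrically), `none` means no edge. -/
abbrev EC (V : Type) (m : ℕ) := V → V → Option (Fin m)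

/-- The colouring is stored symmetrically. -/
def ECSymm {V : Type} {m : ℕ} (G : EC V m) : Prop := ∀ u v, G u v = G v u

/-- Switching at a vertex `v` with a permutation `π` of the colours. -/
def ECswitch {V : Type} [DecidableEq V] {m : ℕ} (G : EC V m) (v : V) (π : Perm (Fin m)) :
    EC V m :=
  fun x y => if x = v ∨ y = v then (G x y).map π else G x y

/-- Switching with respect to a sequence of (vertex, permutation) pairs, applied in order. -/
def ECswitchSeq {V : Type} [DecidableEq V] {m : ℕ} (G : EC V m) :
    List (V × Perm (Fin m)) → EC V m
  | [] => G
  | (v, π) :: rest => ECswitchSeq (ECswitch G v π) rest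

/-- All permutations occurring in the sequence belong to the group `Γ`. -/
def ValidSeq {V : Type} {m : ℕ} (Γ : Subgroup (Perm (Fin m)))
    (L : List (V × Perm (Fin m))) : Prop :=
  ∀ p ∈ L, p.2 ∈ Γ

/-- `Γ`-switch equivalence of two `m`-edge-coloured graphs on the same vertex set. -/
def SwEquiv {V : Type} [DecidableEq V] {m : ℕ} (Γ : Subgroup (Perm (Fin m)))
    (G G' : EC V m) : Prop :=
  ∃ L, ValidSeq Γ L ∧ ECswitchSeq G L = G'

/-- `G` is monochromatic of colour `i`. -/
def Mono {V : Type} {m : ℕ} (G : EC V m) (i : Fin m) : Prop :=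
  ∀ u v j, G u v = some j → j = i

/-- `G` admits a `Γ`-switchable homomorphism to `K₂^i` (the single edge of colour `i`). -/
def SwHomK2 {V : Type} [DecidableEq V] {m : ℕ} (Γ : Subgroup (Perm (Fin m)))
    (G : EC V m) (i : Fin m) : Prop :=
  ∃ L, ValidSeq Γ L ∧ ∃ f : V → Bool,
    ∀ u v j, ECswitchSeq G L u v = some j → f u ≠ f v ∧ j = i

/-- A `Γ`-switchable homomorphism between `m`-edge-coloured graphs. -/
def SwHom {V W : Type} [DecidableEq V] {m : ℕ} (Γ : Subgroup (Perm (Fin m)))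
    (G : EC V m) (H : EC W m) : Prop :=
  ∃ L, ValidSeq Γ L ∧ ∃ f : V → W,
    ∀ u v j, ECswitchSeq G L u v = some j → H (f u) (f v) = some j

/-- `Γ` acts transitively on the colour set `[m]`. -/
def TransOn {m : ℕ} (Γ : Subgroup (Perm (Fin m))) : Prop :=
  ∀ i j : Fin m, ∃ π ∈ Γ, π i = j

/-- `G` is bipartite. -/
def Bip {V : Type} {m : ℕ} (G : EC V m) : Prop :=
  ∃ g : V → Bool, ∀ u v, (G u v).isSome → g u ≠ g v

/-- `G` (its underlying graph) is connected. -/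
def Conn {V : Type} {m : ℕ} (G : EC V m) : Prop :=
  ∀ u v : V, Relation.ReflTransGen (fun a b => (G a b).isSome) u v

/-- The `m`-edge-coloured cycle of length `n` on `ZMod n`, where the edge from `x` to
`x + 1` has colour `c x`. -/
def cycleFromFn {m : ℕ} (n : ℕ) (c : ZMod n → Fin m) : EC (ZMod n) m :=
  fun x y => if y = x + 1 then some (c x) else if x = y + 1 then some (c y) else none

/-- The cycle of length `n` that is nearly monochromatic of colours `(i, j)`:
all edges have colour `i` except the edge from `-1` (that is, `n - 1`) to `0`,
which has colour `j`. -/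
def nearCycle {m : ℕ} (n : ℕ) (i j : Fin m) : EC (ZMod n) m :=
  cycleFromFn n (fun x => if x = -1 then j else i)

/-- The monochromatic cycle of length `n` of colour `i`. -/
def monoCycle {m : ℕ} (n : ℕ) (i : Fin m) : EC (ZMod n) m :=
  cycleFromFn n (fun _ => i)

/-- The `Γ`-substitution class `⟨i⟩`: the colours `j` such that the `4`-cycle nearly
monochromatic of colours `(i, j)` can be switched to be monochromatic of colour `i`. -/
def subClass {m : ℕ} (Γ : Subgroup (Perm (Fin m))) (i : Fin m) : Set (Fin m) :=
  {j | SwEquiv Γ (nearCycle 4 i j) (monoCycle 4 i)}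

/-- The underlying simple graph of an `m`-edge-coloured graph. -/
def ECtoSimple {V : Type} {m : ℕ} (G : EC V m) (h : ECSymm G) : SimpleGraph V where
  Adj u v := u ≠ v ∧ (G u v).isSome
  symm := by
    refine ⟨?_⟩
    intro u v hv
    exact ⟨Ne.symm hv.1, by rw [h v u]; exact hv.2⟩
  loopless := by refine ⟨?_⟩; intro v hv; exact hv.1 rfl

/-- The number of edges of an `m`-edge-coloured graph. -/
def edgeCount {V : Type} [Fintype V] {m : ℕ} (G : EC V m) : ℕ :=
  (Finset.univ.filter (fun p : V × V => (G p.1 p.2).isSome)).card / 2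

/-!
After a switching sequence, the colour of an edge `uv` is its original colour moved by the
ordered product of the permutations applied at `u` or at `v`. In the abelianisation of `Γ`
this product splits into the contributions of `u` and of `v`, so switching once at each
vertex `w` by the product of everything applied at `w` reproduces every edge colour up to an
element of `[Γ, Γ]`. As `Γ` is finite, every element of `[Γ, Γ]` is a product of at most `K`
commutators, and a commutator `⁅a, b⁆` is applied to the single edge `uv` by the four switches
`(u, b⁻¹), (v, a⁻¹), (u, b), (v, a)`, which cancel on every other edge. Hence
`|V| + 4K·|E|` switches suffice.
-/

open scoped commutatorElement

namespace Switching

variable {V H : Type} [Group H]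

def switchProd (p : V → Prop) [DecidablePred p] (L : List (V × H)) : H :=
  ((L.filter fun e => p e.1).map Prod.snd).reverse.prod

section switchProd

variable (p : V → Prop) [DecidablePred p]

@[simp]
lemma switchProd_nil : switchProd p ([] : List (V × H)) = 1 := rfl

lemma switchProd_cons (e : V × H) (L : List (V × H)) :
    switchProd p (e :: L) = switchProd p L * if p e.1 then e.2 else 1 := by
  by_cases h : p e.1 <;> simp [switchProd, h]

lemma switchProd_append (L₁ L₂ : List (V × H)) :
    switchProd p (L₁ ++ L₂) = switchProd p L₂ * switchProd p L₁ := by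
  simp [switchProd, List.filter_append]

lemma switchProd_congr {q : V → Prop} [DecidablePred q] (h : ∀ w, p w ↔ q w)
    (L : List (V × H)) : switchProd p L = switchProd q L := by
  simp only [switchProd, h]

lemma map_switchProd {K : Type} [Group K] (f : H →* K) (L : List (V × H)) :
    f (switchProd p L) = switchProd p (L.map (Prod.map id f)) := by
  induction L with
  | nil => simp
  | cons e L ih => by_cases h : p e.1 <;> simp [switchProd_cons, h, ih]

end switchProd

lemma map_switchProd_or {A : Type} [CommGroup A] (f : H →* A) (p q : V → Prop)
    [DecidablePred p] [DecidablePred q] (hpq : ∀ w, ¬(p w ∧ q w)) (L : List (V × H)) :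
    f (switchProd (fun w => p w ∨ q w) L) = f (switchProd p L) * f (switchProd q L) := by
  induction L with
  | nil => simp
  | cons e L ih =>
    simp only [switchProd_cons, map_mul, ih]
    by_cases hp : p e.1 <;> by_cases hq : q e.1
    · exact absurd ⟨hp, hq⟩ (hpq e.1)
    all_goals simp [hp, hq, mul_comm, mul_left_comm]

lemma switchProd_map_pair_of_nodup [DecidableEq V] (σ : V → H) {ws : List V} (hws : ws.Nodup)
    (w : V) : switchProd (· = w) (ws.map fun x => (x, σ x)) = if w ∈ ws then σ w else 1 := by
  induction ws with
  | nil => simp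
  | cons x ws ih =>
    rw [List.nodup_cons] at hws
    rw [List.map_cons, switchProd_cons, ih hws.2]
    by_cases hxw : x = w
    · subst hxw
      simp [hws.1]
    · simp [hxw, Ne.symm hxw]

noncomputable def vertexRound [Fintype V] [DecidableEq V] (L : List (V × H)) : List (V × H) :=
  Finset.univ.toList.map fun w => (w, switchProd (· = w) L)

section vertexRound

variable [Fintype V] [DecidableEq V] (L : List (V × H))

lemma length_vertexRound : (vertexRound L).length = Fintype.card V := by
  simp [vertexRound]

lemma switchProd_vertexRound (w : V) :
    switchProd (· = w) (vertexRound L) = switchProd (· = w) L := by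
  simp [vertexRound, switchProd_map_pair_of_nodup _ (Finset.nodup_toList _)]

end vertexRound

section Sym2

variable [DecidableEq V]

lemma of_switchProd_mem_mk {x y : V} (hxy : x ≠ y) (L : List (V × H)) :
    Abelianization.of (switchProd (· ∈ s(x, y)) L) =
      Abelianization.of (switchProd (· = x) L) * Abelianization.of (switchProd (· = y) L) := by
  rw [switchProd_congr _ (fun _ => Sym2.mem_iff) L]
  exact map_switchProd_or _ _ _ (fun w h => hxy (h.1.symm.trans h.2)) L

lemma switchProd_mul_inv_mem_commutator {L₁ L₂ : List (V × H)}
    (h : ∀ w, switchProd (· = w) L₁ = switchProd (· = w) L₂) (s : Sym2 V) :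
    switchProd (· ∈ s) L₁ * (switchProd (· ∈ s) L₂)⁻¹ ∈ commutator H := by
  induction s using Sym2.ind with
  | h x y =>
    by_cases hxy : x = y
    · subst hxy
      simp [h]
    · rw [← Abelianization.ker_of, MonoidHom.mem_ker, map_mul, map_inv,
        of_switchProd_mem_mk hxy, of_switchProd_mem_mk hxy, h, h, mul_inv_cancel]

end Sym2

def commBlock (u v : V) (ab : H × H) : List (V × H) :=
  [(u, ab.2⁻¹), (v, ab.1⁻¹), (u, ab.2), (v, ab.1)]

def commSeq (u v : V) (l : List (H × H)) : List (V × H) :=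
  l.reverse.flatMap (commBlock u v)

section commSeq

variable (p : V → Prop) [DecidablePred p] {u v : V}

lemma switchProd_commBlock_of_mem (hu : p u) (hv : p v) (ab : H × H) :
    switchProd p (commBlock u v ab) = ⁅ab.1, ab.2⁆ := by
  simp [commBlock, switchProd, hu, hv, commutatorElement_def, mul_assoc]

lemma switchProd_commBlock_of_not_mem (huv : ¬(p u ∧ p v)) (ab : H × H) :
    switchProd p (commBlock u v ab) = 1 := by
  by_cases hu : p u <;> by_cases hv : p v
  · exact absurd ⟨hu, hv⟩ huv
  all_goals simp [commBlock, switchProd, hu, hv]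

lemma length_commSeq (l : List (H × H)) : (commSeq u v l).length = 4 * l.length := by
  induction l with
  | nil => rfl
  | cons ab l ih =>
    simp only [commSeq, List.reverse_cons, List.flatMap_append] at ih ⊢
    simp [ih, commBlock]
    ring

lemma switchProd_commSeq_of_mem (hu : p u) (hv : p v) (l : List (H × H)) :
    switchProd p (commSeq u v l) = (l.map fun ab => ⁅ab.1, ab.2⁆).prod := by
  induction l with
  | nil => rfl
  | cons ab l ih =>
    simp only [commSeq, List.reverse_cons, List.flatMap_append] at ih ⊢
    simp [switchProd_append, ih, switchProd_commBlock_of_mem p hu hv]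

lemma switchProd_commSeq_of_not_mem (huv : ¬(p u ∧ p v)) (l : List (H × H)) :
    switchProd p (commSeq u v l) = 1 := by
  induction l with
  | nil => rfl
  | cons ab l ih =>
    simp only [commSeq, List.reverse_cons, List.flatMap_append] at ih ⊢
    simp [switchProd_append, ih, switchProd_commBlock_of_not_mem p huv]

end commSeq

variable (H) in
def CommutatorWidthLE (K : ℕ) : Prop :=
  ∀ d ∈ commutator H, ∃ l : List (H × H), l.length ≤ K ∧ (l.map fun ab => ⁅ab.1, ab.2⁆).prod = d

lemma exists_commutator_word {d : H} (hd : d ∈ commutator H) :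
    ∃ l : List (H × H), (l.map fun ab => ⁅ab.1, ab.2⁆).prod = d := by
  rw [commutator_eq_closure] at hd
  induction hd using Subgroup.closure_induction with
  | mem x hx =>
    obtain ⟨a, b, rfl⟩ := hx
    exact ⟨[(a, b)], by simp⟩
  | one => exact ⟨[], rfl⟩
  | mul x y _ _ hx hy =>
    obtain ⟨lx, rfl⟩ := hx
    obtain ⟨ly, rfl⟩ := hy
    exact ⟨lx ++ ly, by simp⟩
  | inv x _ hx =>
    obtain ⟨l, rfl⟩ := hx
    refine ⟨(l.map Prod.swap).reverse, ?_⟩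
    simp [List.prod_inv_reverse, List.map_reverse, Function.comp_def, commutatorElement_inv]

variable (H) in
lemma exists_commutatorWidthLE [Finite H] : ∃ K, CommutatorWidthLE H K := by
  classical
  choose! word hword using fun d (hd : d ∈ commutator H) => exists_commutator_word hd
  obtain ⟨K, hK⟩ := Finite.exists_le fun d => (word d).length
  exact ⟨K, fun d hd => ⟨word d, hK d, hword d hd⟩⟩

lemma exists_length_le_switchProd_eq_ite [DecidableEq V] {K : ℕ} (hK : CommutatorWidthLE H K)
    (F : Finset (Sym2 V)) (hF : ∀ s ∈ F, ¬s.IsDiag) (d : Sym2 V → H)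
    (hd : ∀ s ∈ F, d s ∈ commutator H) :
    ∃ C : List (V × H), C.length ≤ 4 * K * F.card ∧
      ∀ s, switchProd (· ∈ s) C = if s ∈ F then d s else 1 := by
  induction F using Finset.induction_on with
  | empty => exact ⟨[], by simp, fun _ => by simp⟩
  | insert s F hsF ih =>
    obtain ⟨C, hClen, hC⟩ := ih (fun t ht => hF t (Finset.mem_insert_of_mem ht))
      (fun t ht => hd t (Finset.mem_insert_of_mem ht))
    obtain ⟨l, hllen, hl⟩ := hK (d s) (hd s (Finset.mem_insert_self s F))
    induction s using Sym2.ind with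
    | h u v =>
    have huv : u ≠ v := fun h => hF _ (Finset.mem_insert_self _ F) (Sym2.mk_isDiag_iff.mpr h)
    refine ⟨commSeq u v l ++ C, ?_, fun t => ?_⟩
    · rw [List.length_append, length_commSeq, Finset.card_insert_of_notMem hsF]
      nlinarith
    · rw [switchProd_append, hC]
      by_cases ht : t = s(u, v)
      · subst ht
        rw [switchProd_commSeq_of_mem _ (Sym2.mem_mk_left u v) (Sym2.mem_mk_right u v), hl]
        simp [hsF]
      · rw [switchProd_commSeq_of_not_mem _ (fun h => ht ((Sym2.mem_and_mem_iff huv).mp h))]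
        simp [ht]

theorem exists_length_le_switchProd_eq [Fintype V] [DecidableEq V] {K : ℕ}
    (hK : CommutatorWidthLE H K) (F : Finset (Sym2 V)) (hF : ∀ s ∈ F, ¬s.IsDiag)
    (L : List (V × H)) :
    ∃ L' : List (V × H), L'.length ≤ Fintype.card V + 4 * K * F.card ∧
      ∀ s, s ∈ F ∨ s.IsDiag → switchProd (· ∈ s) L' = switchProd (· ∈ s) L := by
  set R := vertexRound L
  obtain ⟨C, hClen, hC⟩ := exists_length_le_switchProd_eq_ite hK F hF
    (fun s => switchProd (· ∈ s) L * (switchProd (· ∈ s) R)⁻¹)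
    (fun s _ => switchProd_mul_inv_mem_commutator (fun w => (switchProd_vertexRound L w).symm) s)
  refine ⟨R ++ C, by rw [List.length_append, length_vertexRound]; omega, fun s hs => ?_⟩
  rw [switchProd_append, hC]
  rcases hs with hs | hs
  · simp [hs]
  · have hsF : s ∉ F := fun h => hF s h hs
    induction s using Sym2.ind with
    | h x y =>
    obtain rfl : x = y := Sym2.mk_isDiag_iff.mp hs
    simp [hsF, R, switchProd_vertexRound]

end Switching

open Switching

section ECswitch

variable {V : Type} {m : ℕ}

lemma ECswitchSeq_apply [DecidableEq V] (G : EC V m) (L : List (V × Perm (Fin m))) (x y : V) :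
    ECswitchSeq G L x y = (G x y).map ⇑(switchProd (· ∈ s(x, y)) L) := by
  induction L generalizing G with
  | nil => simp [ECswitchSeq]
  | cons e L ih =>
    obtain ⟨v, π⟩ := e
    rw [ECswitchSeq, ih, switchProd_cons]
    by_cases h : x = v ∨ y = v
    · have hv : v ∈ s(x, y) := by rcases h with rfl | rfl <;> simp
      simp [ECswitch, h, hv, Option.map_map]
    · have hv : v ∉ s(x, y) := by rw [Sym2.mem_iff]; tauto
      simp [ECswitch, h, hv]

lemma exists_map_subtype_eq_of_validSeq {Γ : Subgroup (Perm (Fin m))}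
    {L : List (V × Perm (Fin m))} (hL : ValidSeq Γ L) :
    ∃ L' : List (V × Γ), L'.map (Prod.map id Γ.subtype) = L := by
  induction L with
  | nil => exact ⟨[], rfl⟩
  | cons e L ih =>
    obtain ⟨L', hL'⟩ := ih fun p hp => hL p (List.mem_cons_of_mem e hp)
    exact ⟨(e.1, ⟨e.2, hL e List.mem_cons_self⟩) :: L', by rw [List.map_cons, hL']; rfl⟩

lemma validSeq_map_subtype {Γ : Subgroup (Perm (Fin m))} (L : List (V × Γ)) :
    ValidSeq Γ (L.map (Prod.map id Γ.subtype)) := by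
  intro _ hp
  obtain ⟨q, -, rfl⟩ := List.mem_map.mp hp
  exact q.2.2

lemma card_edgeFinset_ECtoSimple_le_edgeCount [Fintype V] (G : EC V m) (hG : ECSymm G)
    [DecidableRel (ECtoSimple G hG).Adj] :
    (ECtoSimple G hG).edgeFinset.card ≤ edgeCount G := by
  rw [edgeCount, Nat.le_div_iff_mul_le two_pos, mul_comm,
    ← SimpleGraph.dart_card_eq_twice_card_edges, ← Fintype.card_coe]
  exact Fintype.card_le_of_injective (fun d => ⟨d.toProd, by simpa using d.adj.2⟩)
    fun d₁ d₂ h => SimpleGraph.Dart.ext _ _ (congrArg Subtype.val h)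

end ECswitch

lemma add_mul_le_sub_one_add_mul {n e E : ℕ} (c : ℕ) (hn : 0 < n) (he : e ≤ E) :
    n + c * e ≤ n - 1 + (c + 1) * n * (E - n + 1) := by
  have hE : e ≤ n * (E - n + 1) := by
    rcases le_or_gt E n with h | h
    · nlinarith
    · obtain ⟨k, rfl⟩ := Nat.exists_eq_add_of_lt h
      rw [show n + k + 1 - n + 1 = k + 2 by omega]
      nlinarith
  nlinarith

theorem switch_sequence_length_bound_general {m : ℕ} (Γ : Subgroup (Perm (Fin m))) :
    ∃ c : ℕ, ∀ (V : Type) [Fintype V] [DecidableEq V] (G : EC V m),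
      ECSymm G → Bip G →
      (∃ j L, ValidSeq Γ L ∧ Mono (ECswitchSeq G L) j) →
      ∃ j L, ValidSeq Γ L ∧ Mono (ECswitchSeq G L) j ∧
        L.length ≤ Fintype.card V - 1 +
          c * Fintype.card V * (edgeCount G - Fintype.card V + 1) := by
  classical
  obtain ⟨K, hK⟩ := exists_commutatorWidthLE Γ
  refine ⟨4 * K + 1, fun V _ _ G hG _ ⟨j, L₀, hL₀, hmono⟩ => ?_⟩
  rcases isEmpty_or_nonempty V with hV | hV
  · exact ⟨j, [], (fun _ h => nomatch h), fun u => isEmptyElim u, Nat.zero_le _⟩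
  obtain ⟨L, rfl⟩ := exists_map_subtype_eq_of_validSeq hL₀
  set F := (ECtoSimple G hG).edgeFinset
  obtain ⟨L', hlen, hL'⟩ := exists_length_le_switchProd_eq hK F
    (fun _ hs => SimpleGraph.not_isDiag_of_mem_edgeSet _ (SimpleGraph.mem_edgeFinset.mp hs)) L
  refine ⟨j, L'.map (Prod.map id Γ.subtype), validSeq_map_subtype L', fun x y k hk => ?_, ?_⟩
  · obtain ⟨c, hc, -⟩ := Option.map_eq_some_iff.mp ((ECswitchSeq_apply _ _ x y).symm.trans hk)
    have hxy : s(x, y) ∈ F ∨ s(x, y).IsDiag := by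
      by_cases h : x = y
      · exact Or.inr (Sym2.mk_isDiag_iff.mpr h)
      · exact Or.inl (SimpleGraph.mem_edgeFinset.mpr ⟨h, by simp [hc]⟩)
    refine hmono x y k ?_
    rwa [ECswitchSeq_apply, ← map_switchProd, ← hL' _ hxy, map_switchProd, ← ECswitchSeq_apply]
  · rw [List.length_map]
    exact hlen.trans (add_mul_le_sub_one_add_mul _ Fintype.card_pos
      (card_edgeFinset_ECtoSimple_le_edgeCount G hG))

/-- If a bipartite `m`-edge-coloured graph `G` is `Γ`-switch
equivalent to a monochromatic graph (`Γ` transitive on `[m]`), then there is such a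
switching sequence `Σ` with
`|Σ| ≤ |V(G)| - 1 + c_Γ·|V(G)|·(|E(G)| - |V(G)| + 1)`,
where the constant `c_Γ` depends only on `Γ` and `m`. -/
theorem switch_sequence_length_bound {m : ℕ} (Γ : Subgroup (Perm (Fin m)))
    (htr : TransOn Γ) :
    ∃ c : ℕ, ∀ (V : Type) [Fintype V] [DecidableEq V] (G : EC V m),
      ECSymm G → Bip G →
      (∃ j L, ValidSeq Γ L ∧ Mono (ECswitchSeq G L) j) →
      ∃ j L, ValidSeq Γ L ∧ Mono (ECswitchSeq G L) j ∧
        L.length ≤ Fintype.card V - 1 +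
          c * Fintype.card V * (edgeCount G - Fintype.card V + 1) :=
  switch_sequence_length_bound_general Γ
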